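/- (Minimum determinant of the Golden code) Let θ = (1+√5)/2 and θ̄ = (1−√5)/2 be real numbers viewed in ℂ, and set α = 1 + i − i·θ and ᾱ = 1 + i − i·θ̄. For all Gaussian integers a, b, c, d (elements of ℤ[i] viewed as complex numbers), not all zero, the matrix X = (1/√5)·[[α(a+bθ), α(c+dθ)], [i·ᾱ(c+dθ̄), ᾱ(a+bθ̄)]] satisfies |det(X)|^2 ≥ 1/5. In particular det(X) ≠ 0, i.e., the Golden code is fully diverse. -/

import Mathlib

/-!
Since `α ᾱ = 2 + i` and `(a + bθ)(a + bθ̄) = a² + ab - b²`, one has `det X = (2 + i)/5 · z` with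
`z = a² + ab - b² - i (c² + cd - d²) ∈ ℤ[i]`, so `|det X|² = N(z)/5 ≥ 1/5` as soon as `z ≠ 0`.
If `z = 0`, completing the squares gives `x² - 5y² = i (u² - 5w²)` with `x = 2a + b`, `u = 2c + d`.
Modulo `π = 2 + i` the unit `i` becomes `3`, a non-square in `𝔽₅`, so `π` divides `x` and `u`,
and then (using `5 = π π̄`) also `y` and `w`. The equation is homogeneous, so this is an infinite
`π`-adic descent and all four vanish.
-/

open Matrix

namespace GoldenCode

local notation "π" => (⟨2, 1⟩ : GaussianInt)

/-- Reduction modulo `2 + i`, which sends `i` to `3`, a square root of `-1` in `ZMod 5`. -/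
def toZMod5 : GaussianInt →+* ZMod 5 := Zsqrtd.lift ⟨3, by decide⟩

lemma toZMod5_apply (z : GaussianInt) : toZMod5 z = z.re + z.im * 3 := rfl

lemma dvd_of_toZMod5_eq_zero {z : GaussianInt} (h : toZMod5 z = 0) : π ∣ z := by
  have h5 : ((z.re + 3 * z.im : ℤ) : ZMod 5) = 0 := by
    rw [toZMod5_apply] at h; push_cast; linear_combination h
  obtain ⟨k, hk⟩ := (ZMod.intCast_zmod_eq_zero_iff_dvd _ 5).1 h5
  refine ⟨⟨2 * k - z.im, z.im - k⟩, ?_⟩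
  ext <;> simp only [Zsqrtd.re_mul, Zsqrtd.im_mul] <;> omega

lemma not_isUnit_two_add_I : ¬IsUnit π := fun h => by
  have h0 := h.map toZMod5
  rw [show toZMod5 π = 0 by decide, isUnit_zero_iff] at h0
  exact absurd h0 (by decide)

lemma eq_zero_of_sq_eq_three_mul_sq : ∀ s t : ZMod 5, s ^ 2 = 3 * t ^ 2 → s = 0 ∧ t = 0 := by
  decide

def NormEq (x y u w : GaussianInt) : Prop :=
  x ^ 2 - 5 * y ^ 2 = ⟨0, 1⟩ * (u ^ 2 - 5 * w ^ 2)

lemma NormEq.of_mul {p x y u w : GaussianInt} (hp : p ≠ 0)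
    (h : NormEq (p * x) (p * y) (p * u) (p * w)) : NormEq x y u w :=
  mul_left_cancel₀ (pow_ne_zero 2 hp) (by unfold NormEq at h; linear_combination h)

lemma NormEq.dvd {x y u w : GaussianInt} (h : NormEq x y u w) :
    π ∣ x ∧ π ∣ y ∧ π ∣ u ∧ π ∣ w := by
  have hπ : π ≠ 0 := by decide
  have h5 : (5 : GaussianInt) = π * ⟨2, -1⟩ := by decide
  have hφ5 : toZMod5 5 = 0 := by decide
  have hφi : toZMod5 ⟨0, 1⟩ = 3 := by decide
  have hφπ : toZMod5 π = 0 := by decide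
  have hφπbar : toZMod5 ⟨2, -1⟩ = -1 := by decide
  have hxu := congrArg toZMod5 h
  simp only [map_sub, map_mul, map_pow, hφ5, hφi] at hxu
  obtain ⟨hx, hu⟩ :=
    eq_zero_of_sq_eq_three_mul_sq (toZMod5 x) (toZMod5 u) (by linear_combination hxu)
  obtain ⟨x, rfl⟩ := dvd_of_toZMod5_eq_zero hx
  obtain ⟨u, rfl⟩ := dvd_of_toZMod5_eq_zero hu
  have h' : π * x ^ 2 - ⟨2, -1⟩ * y ^ 2 = ⟨0, 1⟩ * (π * u ^ 2 - ⟨2, -1⟩ * w ^ 2) :=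
    mul_left_cancel₀ hπ <| by
      unfold NormEq at h; linear_combination h + (y ^ 2 - ⟨0, 1⟩ * w ^ 2) * h5
  have hyw := congrArg toZMod5 h'
  simp only [map_sub, map_mul, map_pow, hφi, hφπ, hφπbar] at hyw
  obtain ⟨hy, hw⟩ :=
    eq_zero_of_sq_eq_three_mul_sq (toZMod5 y) (toZMod5 w) (by linear_combination hyw)
  exact ⟨dvd_mul_right _ _, dvd_of_toZMod5_eq_zero hy, dvd_mul_right _ _,
    dvd_of_toZMod5_eq_zero hw⟩

lemma NormEq.pow_dvd (n : ℕ) : ∀ {x y u w : GaussianInt}, NormEq x y u w →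
    π ^ n ∣ x ∧ π ^ n ∣ y ∧ π ^ n ∣ u ∧ π ^ n ∣ w := by
  induction n with
  | zero => simp
  | succ n ih =>
    intro x y u w h
    obtain ⟨⟨x, rfl⟩, ⟨y, rfl⟩, ⟨u, rfl⟩, ⟨w, rfl⟩⟩ := h.dvd
    obtain ⟨hx, hy, hu, hw⟩ := ih (h.of_mul (by decide))
    simp only [pow_succ', mul_dvd_mul_left, hx, hy, hu, hw, and_self]

lemma NormEq.eq_zero {x y u w : GaussianInt} (h : NormEq x y u w) :
    x = 0 ∧ y = 0 ∧ u = 0 ∧ w = 0 := by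
  have eq_zero_of_forall_pow_dvd {z : GaussianInt} (hz : ∀ n : ℕ, π ^ n ∣ z) : z = 0 := by
    by_contra hz0
    exact FiniteMultiplicity.not_iff_forall.2 hz (.of_not_isUnit not_isUnit_two_add_I hz0)
  exact ⟨eq_zero_of_forall_pow_dvd fun n => (h.pow_dvd n).1,
    eq_zero_of_forall_pow_dvd fun n => (h.pow_dvd n).2.1,
    eq_zero_of_forall_pow_dvd fun n => (h.pow_dvd n).2.2.1,
    eq_zero_of_forall_pow_dvd fun n => (h.pow_dvd n).2.2.2⟩

lemma eq_zero_of_sq_add_mul_sub_sq_eq {a b c d : GaussianInt}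
    (h : a ^ 2 + a * b - b ^ 2 = ⟨0, 1⟩ * (c ^ 2 + c * d - d ^ 2)) :
    a = 0 ∧ b = 0 ∧ c = 0 ∧ d = 0 := by
  obtain ⟨ha, rfl, hc, rfl⟩ := NormEq.eq_zero (x := 2 * a + b) (y := b) (u := 2 * c + d) (w := d)
    (by unfold NormEq; linear_combination 4 * h)
  have h2 : (2 : GaussianInt) ≠ 0 := by decide
  exact ⟨(mul_eq_zero.1 (by simpa using ha)).resolve_left h2, rfl,
    (mul_eq_zero.1 (by simpa using hc)).resolve_left h2, rfl⟩

lemma one_div_five_le_norm_two_add_I_div_five_mul_sq {z : GaussianInt} (hz : z ≠ 0) :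
    1 / 5 ≤ ‖(2 + Complex.I) / 5 * GaussianInt.toComplex z‖ ^ 2 := by
  have hnorm : (1 : ℝ) ≤ z.norm := by exact_mod_cast GaussianInt.norm_pos.2 hz
  rw [Complex.sq_norm, map_mul, ← GaussianInt.intCast_real_norm,
    show Complex.normSq ((2 + Complex.I) / 5) = 1 / 5 by simp [Complex.normSq_apply]; norm_num]
  linarith

lemma det_goldenMatrix {θ θ' s : ℂ} (hsum : θ + θ' = 1) (hprod : θ * θ' = -1) (hs : s ^ 2 = 5)
    (A B C D : ℂ) :
    ((1 / s) • !![(1 + Complex.I - Complex.I * θ) * (A + B * θ),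
        (1 + Complex.I - Complex.I * θ) * (C + D * θ);
        Complex.I * (1 + Complex.I - Complex.I * θ') * (C + D * θ'),
        (1 + Complex.I - Complex.I * θ') * (A + B * θ')]).det =
      (2 + Complex.I) / 5 * (A ^ 2 + A * B - B ^ 2 - Complex.I * (C ^ 2 + C * D - D ^ 2)) := by
  have hαα :
      (1 + Complex.I - Complex.I * θ) * (1 + Complex.I - Complex.I * θ') = 2 + Complex.I := by
    linear_combination (-Complex.I * (1 + Complex.I)) * hsum + Complex.I ^ 2 * hprod - Complex.I_sq
  have hAB : (A + B * θ) * (A + B * θ') = A ^ 2 + A * B - B ^ 2 := by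
    linear_combination A * B * hsum + B ^ 2 * hprod
  have hCD : (C + D * θ) * (C + D * θ') = C ^ 2 + C * D - D ^ 2 := by
    linear_combination C * D * hsum + D ^ 2 * hprod
  have hs' : (1 / s) ^ 2 = 1 / 5 := by rw [div_pow, hs, one_pow]
  rw [det_smul, det_fin_two_of, Fintype.card_fin, hs']
  linear_combination
    (1 / 5 : ℂ) * ((A + B * θ) * (A + B * θ') - Complex.I * (C + D * θ) * (C + D * θ')) * hαα
      + (2 + Complex.I) / 5 * hAB - (2 + Complex.I) * Complex.I / 5 * hCD

end GoldenCode

theorem stmt_3 (a b c d : GaussianInt)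
    (h : ¬(a = 0 ∧ b = 0 ∧ c = 0 ∧ d = 0)) :
    let θ : ℂ := (((1 + Real.sqrt 5) / 2 : ℝ) : ℂ)
    let θbar : ℂ := (((1 - Real.sqrt 5) / 2 : ℝ) : ℂ)
    let α : ℂ := 1 + Complex.I - Complex.I * θ
    let αbar : ℂ := 1 + Complex.I - Complex.I * θbar
    let X : Matrix (Fin 2) (Fin 2) ℂ :=
      (1 / ((Real.sqrt 5 : ℝ) : ℂ)) •
        !![α * (GaussianInt.toComplex a + GaussianInt.toComplex b * θ),
           α * (GaussianInt.toComplex c + GaussianInt.toComplex d * θ);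
           Complex.I * αbar * (GaussianInt.toComplex c + GaussianInt.toComplex d * θbar),
           αbar * (GaussianInt.toComplex a + GaussianInt.toComplex b * θbar)]
    1 / 5 ≤ ‖X.det‖ ^ 2 ∧ X.det ≠ 0 := by
  intro θ θbar α αbar X
  have hs : ((Real.sqrt 5 : ℝ) : ℂ) ^ 2 = 5 := by norm_cast; simp
  have hsum : θ + θbar = 1 := by simp only [θ, θbar]; push_cast; ring
  have hprod : θ * θbar = -1 := by simp only [θ, θbar]; push_cast; linear_combination -hs / 4
  set z : GaussianInt := a ^ 2 + a * b - b ^ 2 - ⟨0, 1⟩ * (c ^ 2 + c * d - d ^ 2)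
  have hdet : X.det = (2 + Complex.I) / 5 * GaussianInt.toComplex z := by
    rw [GoldenCode.det_goldenMatrix hsum hprod hs]
    simp [z, GaussianInt.toComplex_def']
  have hz : z ≠ 0 := fun hz =>
    h (GoldenCode.eq_zero_of_sq_add_mul_sub_sq_eq (by linear_combination hz))
  refine ⟨hdet ▸ GoldenCode.one_div_five_le_norm_two_add_I_div_five_mul_sq hz, ?_⟩
  rw [hdet]
  exact mul_ne_zero (by norm_num [Complex.ext_iff]) (GaussianInt.toComplex_eq_zero.not.2 hz)
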